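/- With the network setup of the previous statement for two parameter collections (A_j, b_j) and (Ã_j, b̃_j) both satisfying the norm bounds by M, define h^{[j]} and h̃^{[j]} by the respective recursions from the same input x. Then ‖h^{[L]} − h̃^{[L]}‖_∞ ≤ L · B^L · M^{L−1} · max_j (3‖A_j − Ã_j‖₁ + ‖b_j − b̃_j‖_∞), where ‖A‖₁ denotes the maximum row ℓ₁-norm. -/
import Mathlib


open Finset

/-- Parameter-perturbation stability of the network: if two parameter collections
`(A_j, b_j)` and `(Ã_j, b̃_j)` both satisfy the norm bounds by `M ≥ 2`, `σ` is
`B`-Lipschitz with `|σ(u)| ≤ B|u|`, `B ≥ 1`, and `D` bounds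
`max_j (3‖A_j − Ã_j‖₁ + ‖b_j − b̃_j‖_∞)` (maximum-row-ℓ₁ norm), then
`‖h^{[L]} − h̃^{[L]}‖_∞ ≤ L B^L M^{L−1} D`. -/
theorem stmt12 (L : ℕ) (dims : ℕ → ℕ)
    (A A' : (j : ℕ) → Matrix (Fin (dims (j + 1))) (Fin (dims j)) ℝ)
    (bvec bvec' : (j : ℕ) → Fin (dims (j + 1)) → ℝ)
    (σ : ℝ → ℝ) (B M : ℝ) (hB : 1 ≤ B) (hM : 2 ≤ M)
    (hσ0 : ∀ u, |σ u| ≤ B * |u|)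
    (hσlip : ∀ u v, |σ u - σ v| ≤ B * |u - v|)
    (hA : ∀ j i, ∑ k, |A j i k| ≤ M) (hA' : ∀ j i, ∑ k, |A' j i k| ≤ M)
    (hb : ∀ j i, |bvec j i| ≤ M) (hb' : ∀ j i, |bvec' j i| ≤ M)
    (x : Fin (dims 0) → ℝ) (hx : ∀ i, |x i| ≤ 1)
    (h h' : (j : ℕ) → Fin (dims j) → ℝ)
    (h0 : h 0 = x) (h0' : h' 0 = x)
    (hrec : ∀ j, h (j + 1) = fun i => σ ((A j).mulVec (h j) i + bvec j i))
    (hrec' : ∀ j, h' (j + 1) = fun i => σ ((A' j).mulVec (h' j) i + bvec' j i))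
    (D : ℝ)
    (hD : ∀ j < L, ∀ i, 3 * (∑ k, |A j i k - A' j i k|) + |bvec j i - bvec' j i| ≤ D) :
    ∀ i, |h L i - h' L i| ≤ (L : ℝ) * B ^ L * M ^ (L - 1) * D := by
  have hB0 : (0:ℝ) ≤ B := by linarith
  have hM0 : (0:ℝ) ≤ M := by linarith
  have hBM2 : (2:ℝ) ≤ B * M := by nlinarith
  have hBM0 : (0:ℝ) ≤ B * M := by linarith
  have hpow1 : ∀ j : ℕ, (1:ℝ) ≤ (B * M) ^ j := fun j => one_le_pow₀ (by linarith)
  -- forward bound on h'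
  have fwd : ∀ j i, |h' j i| ≤ 3 * (B * M) ^ j - 2 := by
    intro j
    induction j with
    | zero =>
      intro i
      rw [h0']
      simpa using by linarith [hx i]
    | succ j ih =>
      intro i
      rw [hrec' j]
      have hmv : |(A' j).mulVec (h' j) i| ≤ M * (3 * (B * M) ^ j - 2) := by
        rw [Matrix.mulVec, dotProduct]
        calc |∑ k, A' j i k * h' j k| ≤ ∑ k, |A' j i k * h' j k| :=
              Finset.abs_sum_le_sum_abs _ _
          _ ≤ ∑ k, |A' j i k| * (3 * (B * M) ^ j - 2) := by
              refine Finset.sum_le_sum fun k _ => ?_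
              rw [abs_mul]
              exact mul_le_mul_of_nonneg_left (ih k) (abs_nonneg _)
          _ = (∑ k, |A' j i k|) * (3 * (B * M) ^ j - 2) := by rw [← Finset.sum_mul]
          _ ≤ M * (3 * (B * M) ^ j - 2) := by
              refine mul_le_mul_of_nonneg_right (hA' j i) ?_
              linarith [hpow1 j]
      calc |σ ((A' j).mulVec (h' j) i + bvec' j i)| ≤ B * |(A' j).mulVec (h' j) i + bvec' j i| :=
            hσ0 _
        _ ≤ B * (|(A' j).mulVec (h' j) i| + |bvec' j i|) :=
            mul_le_mul_of_nonneg_left (abs_add_le _ _) hB0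
        _ ≤ B * (M * (3 * (B * M) ^ j - 2) + M) := by
            refine mul_le_mul_of_nonneg_left (by linarith [hb' j i]) hB0
        _ ≤ 3 * (B * M) ^ (j + 1) - 2 := by
            rw [pow_succ]
            nlinarith [hpow1 j]
  -- main claim by induction
  have claim : ∀ j, j ≤ L → ∀ i, |h j i - h' j i| ≤ (j : ℝ) * B ^ j * M ^ (j - 1) * D := by
    intro j
    induction j with
    | zero =>
      intro _ i
      rw [h0, h0']
      simp
    | succ j ih =>
      intro hjL i
      have hj : j < L := Nat.lt_of_succ_le hjL
      have ihj := ih (Nat.le_of_lt hj)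
      set S : ℝ := ∑ k, |A j i k - A' j i k| with hS
      set t : ℝ := |bvec j i - bvec' j i| with ht
      have hS0 : 0 ≤ S := Finset.sum_nonneg fun k _ => abs_nonneg _
      have ht0 : 0 ≤ t := abs_nonneg _
      have hDi : 3 * S + t ≤ D := hD j hj i
      have hD0 : 0 ≤ D := le_trans (by positivity) hDi
      have ej0 : 0 ≤ (j : ℝ) * B ^ j * M ^ (j - 1) * D := by positivity
      -- decompose the difference of mulVecs
      have hdec : (A j).mulVec (h j) i - (A' j).mulVec (h' j) i
          = (∑ k, A j i k * (h j k - h' j k)) + ∑ k, (A j i k - A' j i k) * h' j k := by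
        rw [Matrix.mulVec, Matrix.mulVec, dotProduct, dotProduct,
          ← Finset.sum_add_distrib, ← Finset.sum_sub_distrib]
        congr 1
        ext k
        ring
      have h1 : |∑ k, A j i k * (h j k - h' j k)| ≤ M * ((j : ℝ) * B ^ j * M ^ (j - 1) * D) := by
        calc |∑ k, A j i k * (h j k - h' j k)| ≤ ∑ k, |A j i k * (h j k - h' j k)| :=
              Finset.abs_sum_le_sum_abs _ _
          _ ≤ ∑ k, |A j i k| * ((j : ℝ) * B ^ j * M ^ (j - 1) * D) := by
              refine Finset.sum_le_sum fun k _ => ?_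
              rw [abs_mul]
              exact mul_le_mul_of_nonneg_left (ihj k) (abs_nonneg _)
          _ = (∑ k, |A j i k|) * ((j : ℝ) * B ^ j * M ^ (j - 1) * D) := by rw [← Finset.sum_mul]
          _ ≤ M * ((j : ℝ) * B ^ j * M ^ (j - 1) * D) :=
              mul_le_mul_of_nonneg_right (hA j i) ej0
      have h2 : |∑ k, (A j i k - A' j i k) * h' j k| ≤ S * (3 * (B * M) ^ j - 2) := by
        calc |∑ k, (A j i k - A' j i k) * h' j k| ≤ ∑ k, |(A j i k - A' j i k) * h' j k| :=
              Finset.abs_sum_le_sum_abs _ _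
          _ ≤ ∑ k, |A j i k - A' j i k| * (3 * (B * M) ^ j - 2) := by
              refine Finset.sum_le_sum fun k _ => ?_
              rw [abs_mul]
              exact mul_le_mul_of_nonneg_left (fwd j k) (abs_nonneg _)
          _ = S * (3 * (B * M) ^ j - 2) := by rw [← Finset.sum_mul]
      have h3 : S * (3 * (B * M) ^ j - 2) + t ≤ (B * M) ^ j * D := by
        have := hpow1 j
        nlinarith
      have hmain : |h (j + 1) i - h' (j + 1) i|
          ≤ B * (M * ((j : ℝ) * B ^ j * M ^ (j - 1) * D) + (B * M) ^ j * D) := by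
        rw [hrec j, hrec' j]
        show |σ ((A j).mulVec (h j) i + bvec j i) - σ ((A' j).mulVec (h' j) i + bvec' j i)| ≤ _
        calc |σ ((A j).mulVec (h j) i + bvec j i) - σ ((A' j).mulVec (h' j) i + bvec' j i)|
            ≤ B * |((A j).mulVec (h j) i + bvec j i) - ((A' j).mulVec (h' j) i + bvec' j i)| :=
              hσlip _ _
          _ = B * |((A j).mulVec (h j) i - (A' j).mulVec (h' j) i) + (bvec j i - bvec' j i)| := by
              ring_nf
          _ ≤ B * (|(A j).mulVec (h j) i - (A' j).mulVec (h' j) i| + t) :=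
              mul_le_mul_of_nonneg_left (abs_add_le _ _) hB0
          _ ≤ B * ((M * ((j : ℝ) * B ^ j * M ^ (j - 1) * D) + S * (3 * (B * M) ^ j - 2)) + t) := by
              refine mul_le_mul_of_nonneg_left ?_ hB0
              rw [hdec]
              linarith [abs_add_le (∑ k, A j i k * (h j k - h' j k))
                (∑ k, (A j i k - A' j i k) * h' j k), h1, h2]
          _ ≤ B * (M * ((j : ℝ) * B ^ j * M ^ (j - 1) * D) + (B * M) ^ j * D) := by
              refine mul_le_mul_of_nonneg_left (by linarith) hB0
      refine le_trans hmain ?_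
      have hstep : B * M * ((j : ℝ) * B ^ j * M ^ (j - 1) * D) = (j : ℝ) * B ^ (j + 1) * M ^ j * D := by
        cases j with
        | zero => simp
        | succ k =>
          have : (k + 1 : ℕ) - 1 = k := rfl
          rw [this, pow_succ, pow_succ]
          ring
      have hrhs : ((j + 1 : ℕ) : ℝ) * B ^ (j + 1) * M ^ ((j + 1) - 1) * D
          = (j : ℝ) * B ^ (j + 1) * M ^ j * D + B ^ (j + 1) * M ^ j * D := by
        push_cast
        ring
      rw [hrhs, ← hstep]
      have : B * ((B * M) ^ j * D) = B ^ (j + 1) * M ^ j * D := by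
        rw [mul_pow, pow_succ]
        ring
      nlinarith [this]
  exact claim L le_rfl
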